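/- arXiv:1810.10445 — 2 statements merged into one kernel-verified Lean document; each statement's English description precedes it below -/
import Mathlib

section
/- For every bounded linear operator T on a complex Hilbert space H and every complex scalar α, T is numerical-radius parallel to αI, i.e., there exists a unimodular λ such that ω(T + λαI) = ω(T) + |α|. -/
/-- The numerical radius of a bounded operator on a complex Hilbert space. -/
noncomputable def numRadius {H : Type*} [NormedAddCommGroup H] [InnerProductSpace ℂ H]
    (T : H →L[ℂ] H) : ℝ :=
  sSup {r : ℝ | ∃ x : H, ‖x‖ = 1 ∧ r = ‖(inner ℂ (T x) x : ℂ)‖}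

/-- Numerical radius parallelism: `ω(T + λS) = ω(T) + ω(S)` for some unimodular `λ`. -/
def nrParallel {H : Type*} [NormedAddCommGroup H] [InnerProductSpace ℂ H]
    (T S : H →L[ℂ] H) : Prop :=
  ∃ lam : ℂ, ‖lam‖ = 1 ∧ numRadius (T + lam • S) = numRadius T + numRadius S
section helpers
variable {H : Type*} [NormedAddCommGroup H] [InnerProductSpace ℂ H]

lemma numSet_bddAbove (A : H →L[ℂ] H) :
    BddAbove {r : ℝ | ∃ x : H, ‖x‖ = 1 ∧ r = ‖(inner ℂ (A x) x : ℂ)‖} := by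
  refine ⟨‖A‖, ?_⟩
  rintro r ⟨x, hx, rfl⟩
  calc ‖(inner ℂ (A x) x : ℂ)‖ ≤ ‖A x‖ * ‖x‖ := by
        exact norm_inner_le_norm _ _
    _ ≤ (‖A‖ * ‖x‖) * ‖x‖ := by gcongr; exact A.le_opNorm x
    _ = ‖A‖ := by rw [hx]; ring

lemma abs_inner_le_numRadius (A : H →L[ℂ] H) {x : H} (hx : ‖x‖ = 1) :
    ‖(inner ℂ (A x) x : ℂ)‖ ≤ numRadius A :=
  le_csSup (numSet_bddAbove A) ⟨x, hx, rfl⟩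

lemma numRadius_nonneg [Nontrivial H] (A : H →L[ℂ] H) : 0 ≤ numRadius A := by
  obtain ⟨x, hx⟩ := exists_norm_eq H zero_le_one
  exact le_trans (norm_nonneg _) (abs_inner_le_numRadius A hx)

lemma inner_eval (T : H →L[ℂ] H) (lam α : ℂ) {x : H} (hx : ‖x‖ = 1) :
    (inner ℂ ((T + lam • (α • (1 : H →L[ℂ] H))) x) x : ℂ)
      = (inner ℂ (T x) x : ℂ) + starRingEnd ℂ (lam * α) := by
  have h1 : (inner ℂ x x : ℂ) = 1 := by
    rw [inner_self_eq_norm_sq_to_K, hx]; norm_num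
  simp [ContinuousLinearMap.add_apply, ContinuousLinearMap.smul_apply,
    inner_add_left, inner_smul_left, h1, hx, mul_comm]

end helpers

theorem nrParallel_id {H : Type*} [NormedAddCommGroup H] [InnerProductSpace ℂ H]
    [Nontrivial H] (T : H →L[ℂ] H) (α : ℂ) :
    ∃ lam : ℂ, ‖lam‖ = 1 ∧
      numRadius (T + lam • (α • (1 : H →L[ℂ] H))) = numRadius T + ‖α‖ := by
  by_cases hα : α = 0
  · exact ⟨1, by simp, by simp [hα]⟩
  set f : ℂ → ℝ := fun lam => numRadius (T + lam • (α • (1 : H →L[ℂ] H))) with hf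
  have hα0 : (0:ℝ) < ‖α‖ := by
    simpa [norm_pos_iff] using hα
  -- Lipschitz-type estimate
  have key_lip : ∀ lam mu : ℂ, f lam ≤ f mu + ‖α‖ * ‖(lam - mu)‖ := by
    intro lam mu
    refine Real.sSup_le ?_ ?_
    · rintro r ⟨x, hx, rfl⟩
      rw [inner_eval T lam α hx]
      have h1 : (inner ℂ (T x) x : ℂ) + starRingEnd ℂ (lam * α)
          = ((inner ℂ (T x) x : ℂ) + starRingEnd ℂ (mu * α)) + starRingEnd ℂ ((lam - mu) * α) := by
        simp only [map_mul, map_sub]; ring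
      rw [h1]
      calc ‖_‖ ≤ ‖((inner ℂ (T x) x : ℂ) + starRingEnd ℂ (mu * α))‖
            + ‖(starRingEnd ℂ ((lam - mu) * α))‖ := norm_add_le _ _
        _ ≤ f mu + ‖α‖ * ‖(lam - mu)‖ := by
            refine add_le_add ?_ ?_
            · have := abs_inner_le_numRadius (T + mu • (α • (1 : H →L[ℂ] H))) hx
              rwa [inner_eval T mu α hx] at this
            · rw [Complex.norm_conj, norm_mul]; ring_nf; exact le_refl _
    · have := numRadius_nonneg (T + mu • (α • (1 : H →L[ℂ] H)))
      positivity
  have hlip : LipschitzWith ⟨‖α‖, hα0.le⟩ f := by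
    refine LipschitzWith.of_dist_le_mul fun lam mu => ?_
    rw [Real.dist_eq, Complex.dist_eq]; show |f lam - f mu| ≤ ‖α‖ * ‖lam - mu‖
    rw [abs_sub_le_iff]
    constructor
    · linarith [key_lip lam mu]
    · have := key_lip mu lam
      rw [← norm_neg (mu - lam), neg_sub] at this
      linarith
  -- maximize over the unit circle
  obtain ⟨lam0, hmem, hmax⟩ := (isCompact_sphere (0:ℂ) 1).exists_isMaxOn
    ⟨1, by simp⟩ hlip.continuous.continuousOn
  have hlam0 : ‖lam0‖ = 1 := by
    simpa [Complex.dist_eq] using hmem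
  -- key claim: for each unit x, |⟨Tx,x⟩| + |α| ≤ f lam0
  have claim : ∀ x : H, ‖x‖ = 1 → ‖(inner ℂ (T x) x : ℂ)‖ + ‖α‖ ≤ f lam0 := by
    intro x hx
    set c : ℂ := (inner ℂ (T x) x : ℂ) with hc
    set d : ℂ := if c = 0 then 1 else c / ‖c‖ with hd
    have hdabs : ‖d‖ = 1 := by
      rw [hd]; split_ifs with h
      · simp
      · rw [norm_div]; simp [Complex.norm_real, abs_of_nonneg (norm_nonneg c),
          div_self (norm_ne_zero_iff.mpr h)]
    have hcd : c = (‖c‖ : ℂ) * d := by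
      rw [hd]; split_ifs with h
      · simp [h]
      · have hne : (‖c‖ : ℂ) ≠ 0 := by
          exact_mod_cast norm_ne_zero_iff.mpr h
        field_simp
    set lam : ℂ := (‖α‖ : ℂ) * starRingEnd ℂ d / α with hlam
    have hlamabs : ‖lam‖ = 1 := by
      rw [hlam, norm_div, norm_mul, Complex.norm_conj, hdabs, Complex.norm_real,
        norm_norm]
      field_simp
    have hconj : starRingEnd ℂ (lam * α) = (‖α‖ : ℂ) * d := by
      rw [hlam]
      have : (‖α‖ : ℂ) * starRingEnd ℂ d / α * α = (‖α‖ : ℂ) * starRingEnd ℂ d := by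
        field_simp
      rw [this, map_mul, Complex.conj_conj, Complex.conj_ofReal]
    have hval : ‖(c + starRingEnd ℂ (lam * α))‖
        = ‖c‖ + ‖α‖ := by
      rw [hconj]
      nth_rewrite 1 [hcd]
      rw [← add_mul, norm_mul, hdabs, mul_one, ← Complex.ofReal_add, Complex.norm_real, Real.norm_eq_abs,
        abs_of_nonneg (by positivity)]
    have hmemlam : lam ∈ Metric.sphere (0:ℂ) 1 := by
      simp [Complex.dist_eq, hlamabs]
    calc ‖c‖ + ‖α‖
        = ‖(inner ℂ ((T + lam • (α • (1 : H →L[ℂ] H))) x) x : ℂ)‖ := by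
          rw [inner_eval T lam α hx, ← hc, hval]
      _ ≤ f lam := abs_inner_le_numRadius _ hx
      _ ≤ f lam0 := hmax hmemlam
  -- conclude
  refine ⟨lam0, hlam0, le_antisymm ?_ ?_⟩
  · -- f lam0 ≤ numRadius T + |α|
    refine Real.sSup_le ?_ ?_
    · rintro r ⟨x, hx, rfl⟩
      rw [inner_eval T lam0 α hx]
      calc ‖_‖ ≤ ‖(inner ℂ (T x) x : ℂ)‖ + ‖(starRingEnd ℂ (lam0 * α))‖ :=
            norm_add_le _ _
        _ ≤ numRadius T + ‖α‖ := by
            refine add_le_add (abs_inner_le_numRadius T hx) ?_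
            rw [Complex.norm_conj, norm_mul, hlam0, one_mul]
    · have := numRadius_nonneg T; positivity
  · -- numRadius T + |α| ≤ f lam0
    have h0 : ‖α‖ ≤ f lam0 := by
      obtain ⟨x, hx⟩ := exists_norm_eq H zero_le_one
      have := claim x hx
      have h2 := norm_nonneg (inner ℂ (T x) x : ℂ)
      linarith
    have : numRadius T ≤ f lam0 - ‖α‖ := by
      refine Real.sSup_le ?_ (by linarith)
      rintro r ⟨x, hx, rfl⟩
      linarith [claim x hx]
    linarith
end

section
/- For every bounded linear operator T on a complex Hilbert space H, T is numerical-radius parallel to its adjoint T*, i.e., there exists a unimodular λ with ω(T + λT*) = ω(T) + ω(T*) = 2ω(T). -/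
section aux

variable {H : Type*} [NormedAddCommGroup H] [InnerProductSpace ℂ H]

lemma nr_mem_le (T : H →L[ℂ] H) {r : ℝ}
    (hr : r ∈ {r : ℝ | ∃ x : H, ‖x‖ = 1 ∧ r = ‖(inner ℂ (T x) x : ℂ)‖}) :
    r ≤ ‖T‖ := by
  obtain ⟨x, hx, rfl⟩ := hr
  calc ‖(inner ℂ (T x) x : ℂ)‖ ≤ ‖T x‖ * ‖x‖ := norm_inner_le_norm _ _
    _ ≤ ‖T‖ * ‖x‖ * ‖x‖ := by
        gcongr; exact T.le_opNorm x
    _ ≤ ‖T‖ := by rw [hx]; ring_nf; simp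

lemma nr_bddAbove (T : H →L[ℂ] H) :
    BddAbove {r : ℝ | ∃ x : H, ‖x‖ = 1 ∧ r = ‖(inner ℂ (T x) x : ℂ)‖} :=
  ⟨‖T‖, fun _ hr => nr_mem_le T hr⟩

lemma nr_nonneg (T : H →L[ℂ] H) : 0 ≤ numRadius T := by
  apply Real.sSup_nonneg
  rintro r ⟨x, hx, rfl⟩
  positivity

lemma le_nr (T : H →L[ℂ] H) {x : H} (hx : ‖x‖ = 1) :
    ‖(inner ℂ (T x) x : ℂ)‖ ≤ numRadius T :=
  le_csSup (nr_bddAbove T) ⟨x, hx, rfl⟩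

lemma nr_le (T : H →L[ℂ] H) {a : ℝ} (ha : 0 ≤ a)
    (h : ∀ x : H, ‖x‖ = 1 → ‖(inner ℂ (T x) x : ℂ)‖ ≤ a) :
    numRadius T ≤ a := by
  apply Real.sSup_le _ ha
  rintro r ⟨x, hx, rfl⟩
  exact h x hx

lemma nr_add_le (T S : H →L[ℂ] H) : numRadius (T + S) ≤ numRadius T + numRadius S := by
  apply nr_le _ (add_nonneg (nr_nonneg T) (nr_nonneg S))
  intro x hx
  simp only [ContinuousLinearMap.add_apply, inner_add_left]
  calc ‖(inner ℂ (T x) x : ℂ) + inner ℂ (S x) x‖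
      ≤ ‖(inner ℂ (T x) x : ℂ)‖ + ‖(inner ℂ (S x) x : ℂ)‖ := by
        exact norm_add_le _ _
    _ ≤ numRadius T + numRadius S := add_le_add (le_nr T hx) (le_nr S hx)

lemma nr_smul_le (c : ℂ) (S : H →L[ℂ] H) :
    numRadius (c • S) ≤ ‖c‖ * numRadius S := by
  apply nr_le _ (mul_nonneg (norm_nonneg c) (nr_nonneg S))
  intro x hx
  simp only [ContinuousLinearMap.smul_apply, inner_smul_left]
  rw [norm_mul, Complex.norm_conj]
  have := le_nr S hx
  have := norm_nonneg c
  nlinarith [norm_nonneg (inner ℂ (S x) x : ℂ)]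

lemma nr_adjoint [CompleteSpace H] (T : H →L[ℂ] H) :
    numRadius (ContinuousLinearMap.adjoint T) = numRadius T := by
  unfold numRadius
  congr 1
  ext r
  constructor <;> rintro ⟨x, hx, rfl⟩ <;> refine ⟨x, hx, ?_⟩
  · rw [ContinuousLinearMap.adjoint_inner_left, ← inner_conj_symm, Complex.norm_conj]
  · rw [ContinuousLinearMap.adjoint_inner_left, ← inner_conj_symm (T x), Complex.norm_conj]

end aux

theorem nrParallel_adjoint_self {H : Type*} [NormedAddCommGroup H] [InnerProductSpace ℂ H]
    [CompleteSpace H] (T : H →L[ℂ] H) :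
    ∃ lam : ℂ, ‖lam‖ = 1 ∧
      numRadius (T + lam • ContinuousLinearMap.adjoint T)
        = numRadius T + numRadius (ContinuousLinearMap.adjoint T) ∧
      numRadius T + numRadius (ContinuousLinearMap.adjoint T) = 2 * numRadius T := by
  set A := ContinuousLinearMap.adjoint T with hA
  suffices h : ∃ lam : ℂ, ‖lam‖ = 1 ∧
      numRadius (T + lam • A) = 2 * numRadius T by
    obtain ⟨l, hl1, hl2⟩ := h
    exact ⟨l, hl1, by rw [nr_adjoint, hl2]; ring, by rw [nr_adjoint]; ring⟩
  by_cases hx : ∃ x : H, ‖x‖ = 1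
  case neg =>
    have hempty : ∀ S : H →L[ℂ] H, numRadius S = 0 := by
      intro S
      unfold numRadius
      convert Real.sSup_empty using 2
      ext r
      simp only [Set.mem_setOf_eq, Set.mem_empty_iff_false, iff_false]
      rintro ⟨x, hx1, -⟩
      exact hx ⟨x, hx1⟩
    exact ⟨1, by simp, by rw [hempty, hempty]; ring⟩
  case pos =>
  -- the function λ ↦ ω(T + λ A) on the unit circle
  set f : ℂ → ℝ := fun l => numRadius (T + l • A) with hf
  -- Lipschitz estimate
  have key : ∀ l m : ℂ, f l ≤ f m + ‖l - m‖ * numRadius A := by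
    intro l m
    have heq : T + l • A = (T + m • A) + (l - m) • A := by
      rw [sub_smul]; abel
    calc f l = numRadius ((T + m • A) + (l - m) • A) := by rw [hf]; simp only; rw [heq]
      _ ≤ numRadius (T + m • A) + numRadius ((l - m) • A) := nr_add_le _ _
      _ ≤ f m + ‖l - m‖ * numRadius A := by
          exact add_le_add le_rfl (nr_smul_le _ _)
  have hcont : Continuous f := by
    apply LipschitzWith.continuous (K := Real.toNNReal (numRadius A))
    rw [lipschitzWith_iff_dist_le_mul]
    intro l m
    rw [Real.dist_eq, abs_sub_le_iff]
    have hd : (Real.toNNReal (numRadius A) : ℝ) * dist l m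
        = ‖l - m‖ * numRadius A := by
      rw [Complex.dist_eq, Real.coe_toNNReal _ (nr_nonneg A)]
      ring
    constructor
    · have := key l m; linarith
    · have h2 := key m l
      rw [norm_sub_rev] at h2; linarith
  -- maximize over the unit circle
  obtain ⟨l₀, hl₀mem, hl₀max⟩ := IsCompact.exists_isMaxOn (isCompact_sphere (0:ℂ) 1)
    ⟨1, by simp⟩ hcont.continuousOn
  have hl₀ : ‖l₀‖ = 1 := by
    rwa [mem_sphere_zero_iff_norm] at hl₀mem
  refine ⟨l₀, hl₀, le_antisymm ?_ ?_⟩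
  · -- upper bound
    calc f l₀ ≤ numRadius T + numRadius (l₀ • A) := nr_add_le _ _
      _ ≤ numRadius T + ‖l₀‖ * numRadius A := add_le_add le_rfl (nr_smul_le _ _)
      _ = 2 * numRadius T := by rw [hl₀, hA, nr_adjoint]; ring
  · -- lower bound
    apply le_of_forall_pos_le_add
    intro ε hε
    -- find a near-maximizing unit vector
    have hne : {r : ℝ | ∃ x : H, ‖x‖ = 1 ∧ r = ‖(inner ℂ (T x) x : ℂ)‖}.Nonempty := by
      obtain ⟨x, hx1⟩ := hx
      exact ⟨_, x, hx1, rfl⟩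
    have hlt : numRadius T - ε/2 < numRadius T := by linarith
    obtain ⟨r, ⟨x, hx1, rfl⟩, hr⟩ := exists_lt_of_lt_csSup hne hlt
    set z : ℂ := inner ℂ (T x) x with hz
    by_cases hz0 : z = 0
    · -- then ω(T) < ε/2
      rw [hz0] at hr
      simp at hr
      have := nr_nonneg (T + l₀ • A)
      linarith
    · set l : ℂ := (starRingEnd ℂ) z / z with hl
      have habs : ‖l‖ = 1 := by
        rw [hl, norm_div, Complex.norm_conj, div_self]
        exact norm_ne_zero_iff.mpr hz0
      have hlm : l ∈ Metric.sphere (0:ℂ) 1 := by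
        rwa [mem_sphere_zero_iff_norm]
      -- the inner product of (T + l•A) at x is 2z
      have hinner : (inner ℂ ((T + l • A) x) x : ℂ) = 2 * z := by
        simp only [ContinuousLinearMap.add_apply, ContinuousLinearMap.smul_apply,
          inner_add_left, inner_smul_left]
        have hAz : (inner ℂ (A x) x : ℂ) = (starRingEnd ℂ) z := by
          rw [hA, ContinuousLinearMap.adjoint_inner_left, ← inner_conj_symm, hz]
        rw [hAz, hl]
        have hcz : (starRingEnd ℂ) z ≠ 0 := by
          simpa using hz0
        simp only [map_div₀, map_mul, map_inv₀, Complex.conj_conj, ← hz]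
        field_simp
        ring
      have h2z : ‖(inner ℂ ((T + l • A) x) x : ℂ)‖ = 2 * ‖z‖ := by
        rw [hinner, norm_mul]
        norm_num
      have hfl : 2 * ‖z‖ ≤ f l := by
        rw [← h2z, hf]
        exact le_nr _ hx1
      have hmax := hl₀max hlm
      simp only [Set.mem_setOf_eq] at hmax
      calc 2 * numRadius T ≤ 2 * ‖z‖ + ε := by linarith
        _ ≤ f l + ε := by linarith
        _ ≤ f l₀ + ε := by linarith [hmax]
end
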